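/- arXiv:2511.15907 — 5 statements merged into one kernel-verified Lean document; each statement's English description precedes it below -/
import Mathlib

section
/- Let (X,d) be a metric space, (Y,d_Y) a metric space, f : X → Y a map, and L, δ > 0. Then the set E := {x ∈ X : for all y ∈ X with d(x,y) < δ, d_Y(f(x),f(y)) ≤ L·d(x,y)} is closed in X. -/
/-!
Let `x` be a limit of points `z ∈ E` and `dist x y < δ`. Applying the defining inequality of `z` to
`x` itself gives `dist (f z) (f x) ≤ L * dist z x → 0`, so `f z → f x` although `f` need not be
continuous. Applying it to `y` gives `dist (f z) (f y) ≤ L * dist z y` for `z` near `x`, and passing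
to the limit yields the inequality at `x`.
-/

open Filter Topology Metric

theorem tendsto_comp_of_eventually_dist_le_mul {α X Y : Type*} [PseudoMetricSpace X]
    [PseudoMetricSpace Y] {l : Filter α} {u : α → X} {x : X} {f : X → Y} {L : ℝ}
    (hu : Tendsto u l (𝓝 x)) (hf : ∀ᶠ a in l, dist (f (u a)) (f x) ≤ L * dist (u a) x) :
    Tendsto (fun a => f (u a)) l (𝓝 (f x)) :=
  tendsto_iff_dist_tendsto_zero.2 <| squeeze_zero' (.of_forall fun _ => dist_nonneg) hf <| by
    simpa using (tendsto_iff_dist_tendsto_zero.1 hu).const_mul L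

theorem stmt_0_general {X Y : Type*} [MetricSpace X] [MetricSpace Y]
    (f : X → Y) (L δ : ℝ) :
    IsClosed {x : X | ∀ y : X, dist x y < δ → dist (f x) (f y) ≤ L * dist x y} := by
  set E := {x : X | ∀ y : X, dist x y < δ → dist (f x) (f y) ≤ L * dist x y}
  refine isClosed_iff_clusterPt.2 fun x hx y hxy => ?_
  have : NeBot (𝓝[E] x) := hx
  have hδ : 0 < δ := dist_nonneg.trans_lt hxy
  have hE : ∀ᶠ z in 𝓝[E] x, z ∈ E := self_mem_nhdsWithin
  have hx_near : ∀ᶠ z in 𝓝[E] x, dist z x < δ :=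
    nhdsWithin_le_nhds (ball_mem_nhds x hδ)
  have hy_near : ∀ᶠ z in 𝓝[E] x, dist z y < δ :=
    nhdsWithin_le_nhds (isOpen_ball.mem_nhds (mem_ball.2 hxy))
  have hfx : Tendsto f (𝓝[E] x) (𝓝 (f x)) :=
    tendsto_comp_of_eventually_dist_le_mul nhdsWithin_le_nhds <| by
      filter_upwards [hE, hx_near] with z hz hzx using hz x hzx
  have hfy : ∀ᶠ z in 𝓝[E] x, dist (f z) (f y) ≤ L * dist z y := by
    filter_upwards [hE, hy_near] with z hz hzy using hz y hzy
  have hdist : Tendsto (fun z => dist z y) (𝓝[E] x) (𝓝 (dist x y)) :=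
    (tendsto_id.dist tendsto_const_nhds).mono_left nhdsWithin_le_nhds
  exact le_of_tendsto_of_tendsto (hfx.dist tendsto_const_nhds) (hdist.const_mul L) hfy

/-- For a map `f : X → Y` between metric spaces and `L, δ > 0`, the set
`E := {x | ∀ y, d(x,y) < δ → d_Y(f x, f y) ≤ L * d(x,y)}` is closed. -/
theorem stmt_0 {X Y : Type*} [MetricSpace X] [MetricSpace Y]
    (f : X → Y) (L δ : ℝ) (hL : 0 < L) (hδ : 0 < δ) :
    IsClosed {x : X | ∀ y : X, dist x y < δ → dist (f x) (f y) ≤ L * dist x y} :=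
  stmt_0_general f L δ
end

section
/- Let (X,d_X), (Y,d_Y) be metric spaces and let U ⊆ X. Suppose x ∈ U has the following density-type property: for every sequence y_j → x in X, there is a subsequence y_{j_m} and points z_m ∈ U with d(y_{j_m}, z_m)/d(x, y_{j_m}) → 0. Then for every Lipschitz function f : X → ℝ, the pointwise Lipschitz constants satisfy Lip f(x) = Lip (f|_U)(x), where Lip(f|_U)(x) := limsup_{U∋y→x} |f(y)−f(x)|/d(x,y). -/
open Filter

/-- if `x ∈ U` has the density-type approximation property (every sequence
`y_j → x` admits a subsequence approximable by points `z_m ∈ U` at sublinear distance), then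
for every Lipschitz `f : X → ℝ` one has `Lip f (x) = Lip (f|_U) (x)`. -/
theorem stmt_5 {X : Type*} [MetricSpace X] (U : Set X) (x : X) (hx : x ∈ U)
    (hdense : ∀ y : ℕ → X, Filter.Tendsto y Filter.atTop (nhds x) →
      ∃ (σ : ℕ → ℕ) (z : ℕ → X), StrictMono σ ∧ (∀ m, z m ∈ U) ∧
        Filter.Tendsto (fun m => dist (y (σ m)) (z m) / dist x (y (σ m)))
          Filter.atTop (nhds 0))
    (f : X → ℝ) (K : NNReal) (hf : LipschitzWith K f) :
    Filter.limsup (fun y => |f x - f y| / dist x y) (nhdsWithin x {x}ᶜ) =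
      Filter.limsup (fun y => |f x - f y| / dist x y) (nhdsWithin x (U \ {x})) := by
  set g : X → ℝ := fun y => |f x - f y| / dist x y with hgdef
  have hg0 : ∀ y, 0 ≤ g y := fun y => div_nonneg (abs_nonneg _) dist_nonneg
  have hgK : ∀ y, g y ≤ K := by
    intro y
    rcases eq_or_ne (dist x y) 0 with h | h
    · simp only [hgdef, h, div_zero]; exact K.coe_nonneg
    · rw [hgdef]
      rw [div_le_iff₀ (lt_of_le_of_ne dist_nonneg (Ne.symm h))]
      have := hf.dist_le_mul x y
      rwa [Real.dist_eq] at this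
  have hbdd : ∀ l : Filter X, l.IsBoundedUnder (· ≤ ·) g :=
    fun l => isBoundedUnder_of ⟨(K : ℝ), fun y => hgK y⟩
  have hle : nhdsWithin x (U \ {x}) ≤ nhdsWithin x {x}ᶜ :=
    nhdsWithin_mono x (Set.diff_subset_compl U {x})
  by_cases hP : (nhdsWithin x {x}ᶜ).NeBot
  swap
  · rw [not_neBot] at hP
    have hU : nhdsWithin x (U \ {x}) = ⊥ := le_bot_iff.mp (hP ▸ hle)
    rw [hP, hU]
  -- bot-limsup value
  have hbotlim : Filter.limsup g (⊥ : Filter X) = 0 := by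
    have h1 : Filter.limsup g (⊥ : Filter X) = sInf Set.univ := by
      simp [Filter.limsup, Filter.limsSup]
    rw [h1]
    refine Real.sInf_of_not_bddBelow ?_
    rintro ⟨b, hb⟩
    have := hb (Set.mem_univ (b - 1))
    linarith
  set L := Filter.limsup g (nhdsWithin x (U \ {x})) with hLdef
  have hL0 : 0 ≤ L := by
    by_cases hU : (nhdsWithin x (U \ {x})).NeBot
    · exact le_limsup_of_frequently_le ((Eventually.of_forall hg0).frequently) (hbdd _)
    · rw [not_neBot] at hU
      rw [hLdef, hU, hbotlim]
  -- easy direction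
  have heasy : L ≤ Filter.limsup g (nhdsWithin x {x}ᶜ) := by
    by_cases hU : (nhdsWithin x (U \ {x})).NeBot
    · exact limsup_le_limsup_of_le hle (isCoboundedUnder_le_of_le _ hg0) (hbdd _)
    · rw [not_neBot] at hU
      rw [hLdef, hU, hbotlim]
      exact le_limsup_of_frequently_le ((Eventually.of_forall hg0).frequently) (hbdd _)
  refine le_antisymm ?_ heasy
  by_contra hcon
  push_neg at hcon
  set M := Filter.limsup g (nhdsWithin x {x}ᶜ) with hMdef
  set a := (L + M) / 2 with hadef
  have haL : L < a := by rw [hadef]; linarith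
  have haM : a < M := by rw [hadef]; linarith
  have ha0 : 0 < a := lt_of_le_of_lt hL0 haL
  have hfreq : ∃ᶠ y' in nhdsWithin x {x}ᶜ, a < g y' :=
    frequently_lt_of_lt_limsup (isCoboundedUnder_le_of_le _ hg0) haM
  have hlne : ((nhdsWithin x {x}ᶜ) ⊓ 𝓟 {y' | a < g y'}).NeBot :=
    frequently_iff_neBot.mp hfreq
  obtain ⟨y, hy⟩ := ((nhdsWithin x {x}ᶜ) ⊓ 𝓟 {y' | a < g y'}).exists_seq_tendsto
  have hyx : Tendsto y atTop (nhds x) :=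
    hy.mono_right (le_trans inf_le_left nhdsWithin_le_nhds)
  obtain ⟨σ, z, hσ, hzU, hr⟩ := hdense y hyx
  set w : ℕ → X := fun m => y (σ m) with hwdef
  have hwP : Tendsto w atTop ((nhdsWithin x {x}ᶜ) ⊓ 𝓟 {y' | a < g y'}) :=
    hy.comp hσ.tendsto_atTop
  have hw1 : Tendsto w atTop (nhdsWithin x {x}ᶜ) := hwP.mono_right inf_le_left
  have hwx : Tendsto w atTop (nhds x) := hw1.mono_right nhdsWithin_le_nhds
  have hw2 : ∀ᶠ m in atTop, a < g (w m) := by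
    have h := hwP.mono_right inf_le_right
    rw [tendsto_principal] at h
    exact h
  have hwne : ∀ᶠ m in atTop, w m ≠ x := hw1.eventually eventually_mem_nhdsWithin
  -- key estimate
  have key : ∀ m, w m ≠ x →
      g (w m) ≤ g (z m) + 2 * K * (dist (w m) (z m) / dist x (w m)) := by
    intro m hm
    have hD : 0 < dist x (w m) := dist_pos.mpr (Ne.symm hm)
    have hdwz : (0:ℝ) ≤ dist (w m) (z m) := dist_nonneg
    have hrD : dist (w m) (z m) / dist x (w m) * dist x (w m) = dist (w m) (z m) :=
      div_mul_cancel₀ _ (ne_of_gt hD)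
    have habs : |f x - f (w m)| ≤ |f x - f (z m)| + (K:ℝ) * dist (w m) (z m) := by
      have h1 : |f x - f (w m)| ≤ |f x - f (z m)| + |f (z m) - f (w m)| :=
        abs_sub_le _ _ _
      have h2 : |f (z m) - f (w m)| ≤ (K:ℝ) * dist (w m) (z m) := by
        have := hf.dist_le_mul (z m) (w m)
        rw [Real.dist_eq] at this
        rwa [dist_comm (w m) (z m)]
      linarith
    rcases eq_or_ne (z m) x with hz | hz
    · have hz0 : g (z m) = 0 := by simp [hgdef, hz]
      have habs0 : |f x - f (z m)| = 0 := by rw [hz]; simp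
      rw [hz0]
      show |f x - f (w m)| / dist x (w m) ≤ 0 + 2 * (K:ℝ) * (dist (w m) (z m) / dist x (w m))
      rw [div_le_iff₀ hD]
      have hK0 : (0:ℝ) ≤ K := K.coe_nonneg
      nlinarith [habs, habs0, hrD, hdwz, hD.le]
    · have hdz : 0 < dist x (z m) := dist_pos.mpr (Ne.symm hz)
      have h2 : |f x - f (z m)| = g (z m) * dist x (z m) := by
        show _ = |f x - f (z m)| / dist x (z m) * dist x (z m)
        rw [div_mul_cancel₀ _ (ne_of_gt hdz)]
      have h3 : dist x (z m) ≤ dist x (w m) + dist (w m) (z m) := dist_triangle _ _ _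
      have hgz0 : 0 ≤ g (z m) := hg0 _
      have hgzK : g (z m) ≤ (K:ℝ) := hgK _
      have hK0 : (0:ℝ) ≤ K := K.coe_nonneg
      show |f x - f (w m)| / dist x (w m) ≤ g (z m) + 2 * (K:ℝ) * (dist (w m) (z m) / dist x (w m))
      rw [div_le_iff₀ hD]
      nlinarith [habs, h2, h3, hrD, hdwz, hD.le, mul_le_mul_of_nonneg_right hgzK hdwz]
  -- smallness of the error term
  have hrr : Tendsto (fun m => 2 * (K:ℝ) * (dist (w m) (z m) / dist x (w m)))
      atTop (nhds 0) := by
    have := hr.const_mul (2 * (K:ℝ))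
    simpa using this
  have hsm : ∀ᶠ m in atTop,
      2 * (K:ℝ) * (dist (w m) (z m) / dist x (w m)) < (a - L) / 2 :=
    hrr.eventually_lt_const (by linarith)
  -- z m has big quotient eventually
  have hzev : ∀ᶠ m in atTop, (a + L) / 2 < g (z m) := by
    filter_upwards [hw2, hwne, hsm] with m h2 hne h3
    have := key m hne
    linarith
  have hzne : ∀ᶠ m in atTop, z m ≠ x := by
    filter_upwards [hzev] with m h
    intro hzx
    have : g (z m) = 0 := by simp [hgdef, hzx]
    rw [this] at h
    linarith
  -- z tends to x
  have hzx : Tendsto z atTop (nhds x) := by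
    rw [tendsto_iff_dist_tendsto_zero]
    have hDz : Tendsto (fun m => 2 * dist x (w m)) atTop (nhds 0) := by
      have : Tendsto (fun m => dist x (w m)) atTop (nhds 0) := by
        have := tendsto_iff_dist_tendsto_zero.mp hwx
        simpa [dist_comm] using this
      simpa using this.const_mul 2
    refine squeeze_zero' (Eventually.of_forall fun m => dist_nonneg) ?_ hDz
    have hr1 : ∀ᶠ m in atTop, dist (w m) (z m) / dist x (w m) < 1 :=
      hr.eventually_lt_const one_pos
    filter_upwards [hr1, hwne] with m h1 hne
    have hD : 0 < dist x (w m) := dist_pos.mpr (Ne.symm hne)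
    have hwz : dist (w m) (z m) ≤ dist x (w m) := by
      rw [div_lt_one hD] at h1
      exact h1.le
    calc dist (z m) x ≤ dist (z m) (w m) + dist (w m) x := dist_triangle _ _ _
      _ = dist (w m) (z m) + dist x (w m) := by rw [dist_comm (z m), dist_comm (w m) x]
      _ ≤ 2 * dist x (w m) := by linarith
  have hzT : Tendsto z atTop (nhdsWithin x (U \ {x})) := by
    rw [tendsto_nhdsWithin_iff]
    refine ⟨hzx, ?_⟩
    filter_upwards [hzne] with m hne
    exact ⟨hzU m, hne⟩
  have hfinal : ∃ᶠ y' in nhdsWithin x (U \ {x}), (a + L) / 2 ≤ g y' :=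
    hzT.frequently ((hzev.mono fun m h => h.le).frequently)
  have : (a + L) / 2 ≤ L := le_limsup_of_frequently_le hfinal (hbdd _)
  linarith
end

section
/- Let (X,d,μ) be a metric measure space, (U,φ) a rectifiable chart of dimension k (i.e., φ : X → ℝᵏ Lipschitz, bi-Lipschitz on the Borel set U, with φ_#(μ|_U) ≪ ℒᵏ|_{φ(U)}). Then there exist countably many Borel sets V_i ⊆ U with μ(U \ ⋃_i V_i) = 0 and constants C_i > 0 such that (1/C_i)·ℒᵏ|_{φ(V_i)} ≤ φ_#(μ|_{V_i}) ≤ C_i·ℒᵏ|_{φ(V_i)}. -/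
/-!
Since `φ` is anti-Lipschitz on `U` and `μ` is finite on bounded sets, `ν = φ_#(μ|_U)` is finite
on balls, hence σ-finite. By Radon–Nikodym, `ν = g · ℒᵏ|_{φ(U)}` with `0 < g < ∞` `ν`-a.e., so the
level sets `{1/(i+1) < g ≤ i+1}` cover `ν`-almost everything and on each of them `ν` and
`ℒᵏ|_{φ(U)}` agree up to the factor `i+1`. Their preimages under `φ`, intersected with `U`, are
the sets `V i`.
-/

open MeasureTheory Set Bornology Metric
open scoped ENNReal NNReal

theorem ENNReal.exists_nat_mem_Ioc_inv_add_one {t : ℝ≥0∞} (h0 : t ≠ 0) (htop : t ≠ ∞) :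
    ∃ i : ℕ, t ∈ Ioc ((i + 1 : ℝ≥0) : ℝ≥0∞)⁻¹ ((i + 1 : ℝ≥0) : ℝ≥0∞) := by
  obtain ⟨n, hn⟩ := ENNReal.exists_nat_gt htop
  obtain ⟨m, hm⟩ := ENNReal.exists_inv_nat_lt h0
  refine ⟨n + m, lt_of_le_of_lt ?_ hm, hn.le.trans ?_⟩
  · gcongr
    push_cast
    exact_mod_cast (by omega : m ≤ n + m + 1)
  · push_cast
    exact_mod_cast (by omega : n ≤ n + m + 1)

theorem isBounded_inter_preimage_of_dist_le_mul {X Y : Type*} [PseudoMetricSpace X]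
    [PseudoMetricSpace Y] {U : Set X} {φ : X → Y} {c : ℝ} (hc : 0 ≤ c)
    (h : ∀ x ∈ U, ∀ y ∈ U, dist x y ≤ c * dist (φ x) (φ y)) {B : Set Y} (hB : IsBounded B) :
    IsBounded (U ∩ φ ⁻¹' B) := by
  obtain ⟨C, hC⟩ := isBounded_iff.1 hB
  refine isBounded_iff.2 ⟨c * C, fun x hx y hy => ?_⟩
  calc dist x y ≤ c * dist (φ x) (φ y) := h x hx.1 y hy.1
    _ ≤ c * C := by gcongr; exact hC hx.2 hy.2

namespace MeasureTheory

section WithDensity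

variable {α : Type*} [MeasurableSpace α] {ρ : Measure α} {s : Set α} {g : α → ℝ≥0∞}

theorem smul_restrict_le_restrict_withDensity (hs : MeasurableSet s) {a : ℝ≥0∞}
    (ha : ∀ x ∈ s, a ≤ g x) : a • ρ.restrict s ≤ (ρ.withDensity g).restrict s := by
  rw [restrict_withDensity hs, ← withDensity_const]
  exact withDensity_mono (ae_restrict_of_forall_mem hs ha)

theorem restrict_withDensity_le_smul_restrict (hs : MeasurableSet s) {b : ℝ≥0∞}
    (hb : ∀ x ∈ s, g x ≤ b) : (ρ.withDensity g).restrict s ≤ b • ρ.restrict s := by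
  rw [restrict_withDensity hs, ← withDensity_const]
  exact withDensity_mono (ae_restrict_of_forall_mem hs hb)

end WithDensity

namespace Measure

theorem AbsolutelyContinuous.exists_cover_restrict_comparable {α : Type*} [MeasurableSpace α]
    {ν ρ : Measure α} [SigmaFinite ν] [ν.HaveLebesgueDecomposition ρ] (h : ν ≪ ρ) :
    ∃ A : ℕ → Set α, (∀ i, MeasurableSet (A i)) ∧ ν (⋃ i, A i)ᶜ = 0 ∧
      ∀ i : ℕ, ((i + 1 : ℝ≥0) : ℝ≥0∞)⁻¹ • ρ.restrict (A i) ≤ ν.restrict (A i) ∧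
        ν.restrict (A i) ≤ ((i + 1 : ℝ≥0) : ℝ≥0∞) • ρ.restrict (A i) := by
  set g := ν.rnDeriv ρ
  have hA : ∀ i : ℕ,
      MeasurableSet (g ⁻¹' Ioc ((i + 1 : ℝ≥0) : ℝ≥0∞)⁻¹ ((i + 1 : ℝ≥0) : ℝ≥0∞)) :=
    fun i => measurable_rnDeriv ν ρ measurableSet_Ioc
  refine ⟨_, hA, ?_, fun i => ?_⟩
  · refine ae_iff.1 ?_
    filter_upwards [rnDeriv_pos h, h.ae_le (rnDeriv_lt_top ν ρ)] with x h0 htop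
    simpa using ENNReal.exists_nat_mem_Ioc_inv_add_one h0.ne' htop.ne
  · rw [← withDensity_rnDeriv_eq ν ρ h]
    exact ⟨smul_restrict_le_restrict_withDensity (hA i) fun x hx => hx.1.le,
      restrict_withDensity_le_smul_restrict (hA i) fun x hx => hx.2⟩

variable {X Y : Type*} [MeasurableSpace X] [MeasurableSpace Y] {μ : Measure X} {U : Set X}
  {φ : X → Y}

theorem map_restrict_inter_preimage (hφ : Measurable φ) {A : Set Y} (hA : MeasurableSet A) :
    (μ.restrict (U ∩ φ ⁻¹' A)).map φ = ((μ.restrict U).map φ).restrict A := by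
  rw [restrict_map hφ hA, restrict_restrict (hφ hA), inter_comm]

theorem isLocallyFiniteMeasure_map_restrict [PseudoMetricSpace X] [PseudoMetricSpace Y]
    [OpensMeasurableSpace Y] (hμ : ∀ B : Set X, IsBounded B → μ B < ⊤) (hφ : Measurable φ)
    {c : ℝ} (hc : 0 ≤ c) (h : ∀ x ∈ U, ∀ y ∈ U, dist x y ≤ c * dist (φ x) (φ y)) :
    IsLocallyFiniteMeasure ((μ.restrict U).map φ) := by
  refine ⟨fun y => ⟨ball y 1, ball_mem_nhds y one_pos, ?_⟩⟩
  rw [map_apply hφ measurableSet_ball, restrict_apply (hφ measurableSet_ball), inter_comm]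
  exact hμ _ (isBounded_inter_preimage_of_dist_le_mul hc h isBounded_ball)

end Measure

end MeasureTheory

/-- for a rectifiable chart `(U, φ)` of dimension `k` (φ Lipschitz, bi-Lipschitz
on the Borel set `U`, `φ_#(μ|_U) ≪ ℒᵏ|_{φ(U)}`), there are countably many Borel sets
`V i ⊆ U` covering `U` up to a null set and constants `C i > 0` with
`(C i)⁻¹ ℒᵏ|_{φ(V i)} ≤ φ_#(μ|_{V i}) ≤ C i · ℒᵏ|_{φ(V i)}`. -/
theorem stmt_7 {X : Type*} [MetricSpace X] [MeasurableSpace X] [BorelSpace X]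
    (μ : Measure X) (hfin : ∀ B : Set X, Bornology.IsBounded B → μ B < ⊤)
    {k : ℕ} (U : Set X) (hU : MeasurableSet U)
    (φ : X → EuclideanSpace ℝ (Fin k)) (L : NNReal) (hφ : LipschitzWith L φ)
    (c : ℝ) (hc : 0 < c)
    (hbilip : ∀ x ∈ U, ∀ y ∈ U, dist x y ≤ c * dist (φ x) (φ y))
    (hac : (μ.restrict U).map φ ≪ volume.restrict (φ '' U)) :
    ∃ (V : ℕ → Set X) (C : ℕ → NNReal),
      (∀ i, MeasurableSet (V i)) ∧ (∀ i, V i ⊆ U) ∧ μ (U \ ⋃ i, V i) = 0 ∧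
      ∀ i, 0 < C i ∧
        ((C i : ENNReal))⁻¹ • volume.restrict (φ '' V i) ≤ (μ.restrict (V i)).map φ ∧
        (μ.restrict (V i)).map φ ≤ (C i : ENNReal) • volume.restrict (φ '' V i) := by
  have hφm : Measurable φ := hφ.continuous.measurable
  have : IsLocallyFiniteMeasure ((μ.restrict U).map φ) :=
    Measure.isLocallyFiniteMeasure_map_restrict hfin hφm hc.le hbilip
  have : SigmaFinite ((μ.restrict U).map φ) := sigmaFinite_of_locallyFinite
  obtain ⟨A, hA, hcover, hcomp⟩ := hac.exists_cover_restrict_comparable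
  have hAc : MeasurableSet (⋃ i, A i)ᶜ := (MeasurableSet.iUnion hA).compl
  refine ⟨fun i => U ∩ φ ⁻¹' A i, fun i => i + 1, fun i => hU.inter (hφm (hA i)),
    fun i => inter_subset_left, ?_, fun i => ⟨by positivity, ?_⟩⟩
  · rwa [← inter_iUnion, sdiff_self_inter, ← preimage_iUnion, sdiff_eq_compl_inter,
      ← preimage_compl, ← Measure.restrict_apply (hφm hAc), ← Measure.map_apply hφm hAc]
  · rw [Measure.map_restrict_inter_preimage hφm (hA i), image_inter_preimage, inter_comm,
      ← Measure.restrict_restrict (hA i)]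
    exact hcomp i
end

section
/- Let (X,d,μ) be a metric measure space whose porous sets are μ-null, and let (U,φ) be a rectifiable chart of dimension n in X. Let (Y,d_Y) be a metric space and f : X → Y a map. Then for μ-almost every x ∈ U ∩ S(f) at which there exists a seminorm md_x f with limsup_{U∋y→x} |d_Y(f(x),f(y)) − md_x f(φ(x)−φ(y))|/d(x,y) = 0, the same limsup taken over all y ∈ X (not just y ∈ U) is also 0; i.e., weak metric differentiability upgrades to full metric differentiability a.e. on U ∩ S(f). -/
/-!
Let `A_K = U ∩ lipSet f K` be the points of `U` at which `f` is `(K+1)`-Lipschitz at scale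
`1/(K+1)`; these sets cover `U ∩ S(f)`. Since porous sets are null, a.e. `x ∈ A_K` is a
density point of `A_K`: every `y` near `x` has some `u ∈ A_K` with `d(y,u) = o(d(x,y))`.
The error `e(y) = d(f x, f y) - md (φ x - φ y)` is `o(d(x,u))` at `u ∈ A_K ⊆ U` by hypothesis,
and it changes by `O(d(u,y))` from `u` to `y` because `f` is Lipschitz at `u` and `md ∘ φ` is
Lipschitz. Hence `e(y) = o(d(x,y))`.
-/

open Filter MeasureTheory

/-- Porous sets. -/
def Porous {X : Type*} [MetricSpace X] (S : Set X) : Prop :=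
  ∀ x ∈ S, ∃ η > (0 : ℝ), ∃ xs : ℕ → X,
    Filter.Tendsto xs Filter.atTop (nhds x) ∧
    ∀ j, η * dist (xs j) x ≤ Metric.infDist (xs j) S

/-- Pointwise Lipschitz constant (in `ℝ≥0∞`). -/
noncomputable def lipConst {X Y : Type*} [MetricSpace X] [MetricSpace Y]
    (f : X → Y) (x : X) : ENNReal :=
  Filter.limsup (fun y => ENNReal.ofReal (dist (f x) (f y) / dist x y)) (nhdsWithin x {x}ᶜ)

open Asymptotics Metric Topology
open scoped NNReal

theorem Seminorm.exists_lipschitzWith {E : Type*} [NormedAddCommGroup E] [NormedSpace ℝ E]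
    [FiniteDimensional ℝ E] (p : Seminorm ℝ E) : ∃ C : ℝ≥0, LipschitzWith C p := by
  obtain ⟨C, hC, hpC⟩ := p.bound_of_continuous_normedSpace
    (continuousOn_univ.mp (p.convexOn.continuousOn isOpen_univ))
  refine ⟨⟨C, hC.le⟩, LipschitzWith.of_dist_le_mul fun a b => ?_⟩
  calc dist (p a) (p b) ≤ p (a - b) := p.norm_sub_map_le_sub a b
    _ ≤ C * dist a b := by rw [dist_eq_norm]; exact hpC _

section LittleO

variable {α : Type*} {l : Filter α} {u v : α → ℝ}

theorem isLittleO_of_limsup_eq_zero (hO : u =O[l] v) (hv : ∀ᶠ a in l, 0 < v a)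
    (h : limsup (fun a => |u a| / v a) l = 0) : u =o[l] v := by
  obtain ⟨c, hc⟩ := hO.bound
  have hbdd : IsBoundedUnder (· ≤ ·) l (fun a => |u a| / v a) := by
    refine isBoundedUnder_of_eventually_le (a := c) ?_
    filter_upwards [hc, hv] with a ha hva
    rw [div_le_iff₀ hva]
    simpa [Real.norm_eq_abs, abs_of_pos hva] using ha
  refine isLittleO_iff.2 fun ε hε => ?_
  filter_upwards [eventually_lt_of_limsup_lt (h ▸ hε) hbdd, hv] with a ha hva
  rw [div_lt_iff₀ hva] at ha
  simpa [Real.norm_eq_abs, abs_of_pos hva] using ha.le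

theorem limsup_eq_zero_of_isLittleO (h : u =o[l] v) (hv : ∀ a, 0 ≤ v a) :
    limsup (fun a => |u a| / v a) l = 0 := by
  rcases l.eq_or_neBot with rfl | hl
  · simp [limsup_eq]
  refine Tendsto.limsup_eq (tendsto_order.2 ⟨fun b hb => ?_, fun b hb => ?_⟩)
  · exact Eventually.of_forall fun a => hb.trans_le (div_nonneg (abs_nonneg _) (hv a))
  · filter_upwards [isLittleO_iff.1 h (half_pos hb)] with a ha
    rw [Real.norm_eq_abs, Real.norm_of_nonneg (hv a)] at ha
    exact (div_le_of_le_mul₀ (hv a) (half_pos hb).le ha).trans_lt (half_lt_self hb)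

end LittleO

theorem ae_infDist_isLittleO_dist {X : Type*} [MetricSpace X] [MeasurableSpace X]
    {μ : Measure X} (hpor : ∀ S : Set X, Porous S → μ S = 0) (E : Set X) :
    ∀ᵐ x ∂μ, x ∈ E → (fun y => infDist y E) =o[𝓝[≠] x] (fun y => dist x y) := by
  set P := {x | x ∈ E ∧ ¬ (fun y => infDist y E) =o[𝓝[≠] x] (fun y => dist x y)}
  suffices Porous P from measure_mono_null (fun x hx => by simpa [P] using hx) (hpor P this)
  rintro x ⟨hxE, hx⟩
  obtain ⟨η, hη, hfreq⟩ :
      ∃ η > 0, ∃ᶠ y in 𝓝[≠] x, η * dist x y < infDist y E := by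
    simpa [isLittleO_iff, abs_of_nonneg infDist_nonneg] using hx
  obtain ⟨xs, hxs, hηxs⟩ := frequently_iff_seq_forall.1 hfreq
  refine ⟨η, hη, xs, hxs.mono_right nhdsWithin_le_nhds, fun j => ?_⟩
  calc η * dist (xs j) x = η * dist x (xs j) := by rw [dist_comm]
    _ ≤ infDist (xs j) E := (hηxs j).le
    _ ≤ infDist (xs j) P := infDist_le_infDist_of_subset (fun _ hz => hz.1) ⟨x, hxE, hx⟩

section LipSet

variable {X Y : Type*} [MetricSpace X] [MetricSpace Y]

def lipSet (f : X → Y) (K : ℕ) : Set X :=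
  {x | ∀ y, dist x y < ((K : ℝ) + 1)⁻¹ → dist (f x) (f y) ≤ ((K : ℝ) + 1) * dist x y}

theorem exists_mem_lipSet {f : X → Y} {x : X} (h : lipConst f x < ⊤) :
    ∃ K : ℕ, x ∈ lipSet f K := by
  obtain ⟨N, hN⟩ := ENNReal.exists_nat_gt h.ne
  obtain ⟨ρ, hρ, hball⟩ := nhdsWithin_basis_ball.eventually_iff.1
    ((eventually_lt_of_limsup_lt hN).mono fun y hy => (ENNReal.ofReal_lt_natCast
      (by rintro rfl; simp at hN)).1 hy)
  obtain ⟨M, hM⟩ := exists_nat_one_div_lt hρ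
  refine ⟨M + N, fun y hy => ?_⟩
  rcases eq_or_ne y x with rfl | hyx
  · simp
  have hxy : 0 < dist x y := dist_pos.2 hyx.symm
  have hyρ : dist y x < ρ := by
    rw [dist_comm]
    refine hy.trans_le (le_trans ?_ (one_div (M + 1 : ℝ) ▸ hM.le))
    gcongr
    exact_mod_cast Nat.le_add_right M N
  have hratio : dist (f x) (f y) / dist x y < N := hball ⟨hyρ, hyx⟩
  rw [div_lt_iff₀ hxy] at hratio
  refine hratio.le.trans (mul_le_mul_of_nonneg_right ?_ hxy.le)
  push_cast
  linarith [(M.cast_nonneg : (0 : ℝ) ≤ M)]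

theorem abs_sub_le_of_mem_lipSet {f : X → Y} {g : X → ℝ} {G : ℝ≥0}
    (hg : LipschitzWith G g) (x : X) {K : ℕ} {u y : X} (hu : u ∈ lipSet f K)
    (huy : dist u y < ((K : ℝ) + 1)⁻¹) :
    |(dist (f x) (f y) - g y) - (dist (f x) (f u) - g u)| ≤ (K + 1 + G) * dist u y := by
  have hf : |dist (f x) (f y) - dist (f x) (f u)| ≤ dist (f u) (f y) := by
    simpa [dist_comm] using abs_dist_sub_le (f y) (f u) (f x)
  have hgd : |g y - g u| ≤ G * dist u y := by
    simpa only [Real.dist_eq, dist_comm y u] using hg.dist_le_mul y u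
  calc |(dist (f x) (f y) - g y) - (dist (f x) (f u) - g u)|
      ≤ |dist (f x) (f y) - dist (f x) (f u)| + |g y - g u| := by
        rw [show (dist (f x) (f y) - g y) - (dist (f x) (f u) - g u)
          = (dist (f x) (f y) - dist (f x) (f u)) - (g y - g u) by ring]
        exact abs_sub _ _
    _ ≤ (K + 1) * dist u y + G * dist u y := add_le_add (hf.trans (hu y huy)) hgd
    _ = (K + 1 + G) * dist u y := by ring

end LipSet

theorem isLittleO_dist_of_isLittleO_nhdsWithin {X : Type*} [MetricSpace X] {A : Set X} {x : X}
    {h : X → ℝ} {K r : ℝ} (hA : A.Nonempty) (hr : 0 < r) (hK : 0 ≤ K)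
    (hloc : ∀ u ∈ A, ∀ y, dist u y < r → |h y - h u| ≤ K * dist u y)
    (hdense : (fun y => infDist y A) =o[𝓝[≠] x] (fun y => dist x y))
    (hhA : h =o[𝓝[A] x] (fun y => dist x y)) : h =o[𝓝[≠] x] (fun y => dist x y) := by
  refine isLittleO_iff.2 fun ε hε => ?_
  obtain ⟨δ, hδ, hδ_half, hKδ⟩ : ∃ δ > 0, δ ≤ 1 / 2 ∧ K * δ ≤ ε / 4 := by
    refine ⟨min (1 / 2) (ε / (4 * (K + 1))), by positivity, min_le_left _ _, ?_⟩
    calc K * min (1 / 2) (ε / (4 * (K + 1))) ≤ K * (ε / (4 * (K + 1))) := by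
          gcongr; exact min_le_right _ _
      _ = ε / 4 * (K / (K + 1)) := by field_simp
      _ ≤ ε / 4 :=
          mul_le_of_le_one_right (by positivity) ((div_le_one (by positivity)).2 (by linarith))
  obtain ⟨ρ, hρ, hnear⟩ := nhdsWithin_basis_ball.eventually_iff.1
    (isLittleO_iff.1 hhA (show 0 < ε / 4 by positivity))
  have hball : ∀ᶠ y in 𝓝[≠] x, dist y x < min (ρ / 2) r :=
    nhdsWithin_le_nhds (ball_mem_nhds x (by positivity))
  filter_upwards [isLittleO_iff.1 hdense hδ, hball, self_mem_nhdsWithin] with y hyA hyx hne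
  rw [Real.norm_of_nonneg infDist_nonneg, Real.norm_of_nonneg dist_nonneg] at hyA
  rw [Real.norm_eq_abs, Real.norm_of_nonneg dist_nonneg]
  have hxy : 0 < dist x y := dist_pos.2 (Ne.symm hne)
  rw [dist_comm, lt_min_iff] at hyx
  obtain ⟨u, huA, hyu⟩ : ∃ u ∈ A, dist y u < 2 * δ * dist x y :=
    (infDist_lt_iff hA).1 (hyA.trans_lt (by nlinarith))
  have hxu : dist x u ≤ 2 * dist x y := by
    nlinarith [dist_triangle x y u]
  have hhu : |h u| ≤ ε / 4 * dist x u := by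
    simpa [Real.norm_of_nonneg dist_nonneg] using
      hnear ⟨show dist u x < ρ by rw [dist_comm]; linarith, huA⟩
  have hhyu : |h y - h u| ≤ K * dist u y :=
    hloc u huA y (by rw [dist_comm]; nlinarith)
  calc |h y| = |h u + (h y - h u)| := by rw [add_sub_cancel]
    _ ≤ |h u| + |h y - h u| := abs_add_le _ _
    _ ≤ ε / 4 * (2 * dist x y) + K * (2 * δ * dist x y) :=
        add_le_add (hhu.trans (mul_le_mul_of_nonneg_left hxu (by positivity)))
          (hhyu.trans (mul_le_mul_of_nonneg_left (dist_comm u y ▸ hyu.le) hK))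
    _ ≤ ε * dist x y := by nlinarith

theorem stmt_10_general {X Y : Type*} [MetricSpace X] [MeasurableSpace X]
    [MetricSpace Y] (μ : Measure X)
    (hpor : ∀ S : Set X, Porous S → μ S = 0)
    {n : ℕ} (U : Set X)
    (φ : X → EuclideanSpace ℝ (Fin n)) (L : NNReal) (hφ : LipschitzWith L φ)
    (f : X → Y) :
    ∀ᵐ x ∂μ, x ∈ U → lipConst f x < ⊤ →
      ∀ md : Seminorm ℝ (EuclideanSpace ℝ (Fin n)),
        Filter.limsup (fun y => |dist (f x) (f y) - md (φ x - φ y)| / dist x y)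
            (nhdsWithin x (U \ {x})) = 0 →
        Filter.limsup (fun y => |dist (f x) (f y) - md (φ x - φ y)| / dist x y)
            (nhdsWithin x {x}ᶜ) = 0 := by
  have hdense : ∀ᵐ x ∂μ, ∀ K : ℕ, x ∈ U ∩ lipSet f K →
      (fun y => infDist y (U ∩ lipSet f K)) =o[𝓝[≠] x] (fun y => dist x y) :=
    ae_all_iff.2 fun K => ae_infDist_isLittleO_dist hpor _
  filter_upwards [hdense] with x hdense hxU hlip md hweak
  obtain ⟨K, hxK⟩ := exists_mem_lipSet hlip
  have hxA : x ∈ U ∩ lipSet f K := ⟨hxU, hxK⟩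
  obtain ⟨C, hC⟩ := md.exists_lipschitzWith
  have hg : LipschitzWith (C * L) (fun y => md (φ x - φ y)) :=
    hC.comp (LipschitzWith.of_dist_le_mul fun a b => by
      rw [dist_sub_left]; exact hφ.dist_le_mul a b)
  set h : X → ℝ := fun y => dist (f x) (f y) - md (φ x - φ y)
  have hloc : ∀ u ∈ U ∩ lipSet f K, ∀ y, dist u y < ((K : ℝ) + 1)⁻¹ →
      |h y - h u| ≤ (K + 1 + C * L) * dist u y :=
    fun u hu y hy => abs_sub_le_of_mem_lipSet hg x hu.2 hy
  have hx0 : h x = 0 := by simp [h]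
  -- `hweak` bounds a real `limsup`, which carries no information unless the ratio is bounded
  have hO : h =O[𝓝 x] (fun y => dist x y) := by
    refine IsBigO.of_bound (K + 1 + C * L) ?_
    filter_upwards [ball_mem_nhds x (show (0 : ℝ) < ((K : ℝ) + 1)⁻¹ by positivity)] with y hy
    simpa [hx0, Real.norm_eq_abs] using hloc x hxA y (by rwa [dist_comm])
  have hweakO : h =o[𝓝[U ∩ lipSet f K] x] (fun y => dist x y) := by
    have hUo := isLittleO_of_limsup_eq_zero (hO.mono nhdsWithin_le_nhds)
      (eventually_nhdsWithin_of_forall fun y hy => dist_pos.2 (Ne.symm hy.2)) hweak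
    have hA : h =o[𝓝[(U ∩ lipSet f K) \ {x}] x] (fun y => dist x y) :=
      hUo.mono (nhdsWithin_mono x (Set.sdiff_subset_sdiff_left Set.inter_subset_left))
    simpa only [Set.insert_sdiff_singleton, Set.insert_eq_of_mem hxA] using hA.insert hx0
  exact limsup_eq_zero_of_isLittleO (isLittleO_dist_of_isLittleO_nhdsWithin ⟨x, hxA⟩
    (by positivity) (by positivity) hloc (hdense K hxA) hweakO) fun _ => dist_nonneg

/-- in a space whose porous sets are null, for a rectifiable chart `(U,φ)` and any
map `f : X → Y`, at `μ`-a.e. point `x ∈ U ∩ S(f)` weak metric differentiability (limsup over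
`y ∈ U`) upgrades to full metric differentiability (limsup over all `y ∈ X`), with the same
seminorm. -/
theorem stmt_10 {X Y : Type*} [MetricSpace X] [MeasurableSpace X] [BorelSpace X]
    [MetricSpace Y] (μ : Measure X)
    (hpor : ∀ S : Set X, Porous S → μ S = 0)
    {n : ℕ} (U : Set X) (hU : MeasurableSet U)
    (φ : X → EuclideanSpace ℝ (Fin n)) (L : NNReal) (hφ : LipschitzWith L φ)
    (c : ℝ) (hc : 0 < c)
    (hbilip : ∀ x ∈ U, ∀ y ∈ U, dist x y ≤ c * dist (φ x) (φ y))
    (hac : (μ.restrict U).map φ ≪ volume.restrict (φ '' U))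
    (f : X → Y) :
    ∀ᵐ x ∂μ, x ∈ U → lipConst f x < ⊤ →
      ∀ md : Seminorm ℝ (EuclideanSpace ℝ (Fin n)),
        Filter.limsup (fun y => |dist (f x) (f y) - md (φ x - φ y)| / dist x y)
            (nhdsWithin x (U \ {x})) = 0 →
        Filter.limsup (fun y => |dist (f x) (f y) - md (φ x - φ y)| / dist x y)
            (nhdsWithin x {x}ᶜ) = 0 :=
  stmt_10_general μ hpor U φ L hφ f
end

section
/- Let (X,d,μ) be a metric measure space whose porous sets are null, (U,φ) a chart with φ : X → ℝⁿ Lipschitz, and f : X → Y a map into a metric space. Fix x ∈ U and suppose: (a) x has the approximation property that every sequence y_j → x admits a subsequence and points z_m ∈ U ∩ E_{k₀} with d(y_{j_m}, z_m)/d(x,y_{j_m}) → 0, where E_{k₀} := {w : d_Y(f(w),f(y)) ≤ k₀ d(w,y) if d(w,y) < 1/k₀} and x ∈ E_{k₀}; (b) there is a seminorm md_x f with limsup_{U∋y→x} |d_Y(f(x),f(y)) − md_x f(φ(x)−φ(y))|/d(x,y) = 0; (c) |||md_x f||| < ∞. Then limsup_{y→x, y∈X} |d_Y(f(x),f(y))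 − md_x f(φ(x)−φ(y))|/d(x,y) = 0. -/
open Filter MeasureTheory

/-- pointwise core of the weak-to-full upgrade: suppose porous sets are null,
`φ : X → ℝⁿ` is Lipschitz, `x ∈ U ∩ E_{k₀}`, `x` has the approximation property (a) by points
of `U ∩ E_{k₀}`, `md` is a seminorm with the weak differentiability property (b) at `x`, and
`|||md||| < ∞` (c). Then the full limsup over all `y ∈ X` vanishes. -/
theorem stmt_15 {X Y : Type*} [MetricSpace X] [MeasurableSpace X] [BorelSpace X]
    [MetricSpace Y] (μ : Measure X)
    (hpor : ∀ S : Set X, Porous S → μ S = 0)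
    {n : ℕ} (U : Set X) (φ : X → EuclideanSpace ℝ (Fin n))
    (Lφ : NNReal) (hφ : LipschitzWith Lφ φ)
    (f : X → Y) (x : X) (hxU : x ∈ U) (k₀ : ℕ) (hk₀ : 0 < k₀)
    (hxE : ∀ y : X, dist x y < 1 / (k₀ : ℝ) → dist (f x) (f y) ≤ (k₀ : ℝ) * dist x y)
    (happrox : ∀ y : ℕ → X, Filter.Tendsto y Filter.atTop (nhds x) →
      ∃ (σ : ℕ → ℕ) (z : ℕ → X), StrictMono σ ∧
        (∀ m, z m ∈ U ∧ ∀ w : X, dist (z m) w < 1 / (k₀ : ℝ) →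
          dist (f (z m)) (f w) ≤ (k₀ : ℝ) * dist (z m) w) ∧
        Filter.Tendsto (fun m => dist (y (σ m)) (z m) / dist x (y (σ m)))
          Filter.atTop (nhds 0))
    (md : Seminorm ℝ (EuclideanSpace ℝ (Fin n)))
    (hweak : Filter.limsup (fun y => |dist (f x) (f y) - md (φ x - φ y)| / dist x y)
        (nhdsWithin x (U \ {x})) = 0)
    (hfin : ∃ M : ℝ, ∀ v : EuclideanSpace ℝ (Fin n), ‖v‖ ≤ 1 → md v ≤ M) :
    Filter.limsup (fun y => |dist (f x) (f y) - md (φ x - φ y)| / dist x y)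
      (nhdsWithin x {x}ᶜ) = 0 := by
  classical
  obtain ⟨M, hM⟩ := hfin
  have hM0 : 0 ≤ M := by simpa using hM 0 (by simp)
  have hmd : ∀ v : EuclideanSpace ℝ (Fin n), md v ≤ M * ‖v‖ := by
    intro v
    rcases eq_or_ne v 0 with rfl | hv
    · simp
    · have hn : (0:ℝ) < ‖v‖ := norm_pos_iff.2 hv
      have h1 : ‖‖v‖⁻¹ • v‖ = 1 := by
        rw [norm_smul, norm_inv, norm_norm, inv_mul_cancel₀ hn.ne']
      have h2 : md (‖v‖⁻¹ • v) ≤ M := hM _ (le_of_eq h1)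
      rw [map_smul_eq_mul, Real.norm_eq_abs, abs_inv, abs_norm,
        inv_mul_le_iff₀ hn] at h2
      linarith [h2, mul_comm M ‖v‖]
  have hsub : ∀ a b : EuclideanSpace ℝ (Fin n), |md a - md b| ≤ md (a - b) := by
    intro a b
    rw [abs_sub_le_iff]
    constructor
    · have : md a ≤ md (a - b) + md b := by
        calc md a = md (a - b + b) := by rw [sub_add_cancel]
        _ ≤ md (a - b) + md b := map_add_le_add md _ _
      linarith
    · have : md b ≤ md (b - a) + md a := by
        calc md b = md (b - a + a) := by rw [sub_add_cancel]
        _ ≤ md (b - a) + md a := map_add_le_add md _ _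
      rw [map_sub_rev] at this
      linarith
  set g : X → ℝ := fun y => |dist (f x) (f y) - md (φ x - φ y)| / dist x y with hgdef
  have hg0 : ∀ y, 0 ≤ g y := fun y => div_nonneg (abs_nonneg _) dist_nonneg
  by_cases hA : ∃ a : ℝ, ∀ᶠ y in nhdsWithin x (U \ {x}), g y ≤ a
  · -- the weak limsup is a genuine limsup: we get eventual smallness on U \ {x}
    have key : ∀ ε : ℝ, 0 < ε → ∀ᶠ y in nhdsWithin x (U \ {x}), g y ≤ ε := by
      intro ε hε
      by_contra hcon
      have hall : ∀ a ∈ {a : ℝ | ∀ᶠ y in nhdsWithin x (U \ {x}), g y ≤ a}, ε ≤ a := by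
        intro a ha
        by_contra hlt
        push_neg at hlt
        have ha' : ∀ᶠ y in nhdsWithin x (U \ {x}), g y ≤ a := ha
        exact hcon (ha'.mono fun y hy => hy.trans hlt.le)
      have hle : ε ≤ sInf {a : ℝ | ∀ᶠ y in nhdsWithin x (U \ {x}), g y ≤ a} :=
        le_csInf hA hall
      rw [Filter.limsup_eq] at hweak
      rw [hweak] at hle
      linarith
    have main : ∀ ε : ℝ, 0 < ε → ∀ᶠ y in nhdsWithin x {x}ᶜ, g y < ε := by
      intro ε hε
      by_contra hcon
      rw [Filter.not_eventually] at hcon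
      have hne : (nhdsWithin x {x}ᶜ ⊓ 𝓟 {w | ¬ g w < ε}).NeBot :=
        Filter.frequently_iff_neBot.1 hcon
      obtain ⟨y, hy⟩ := Filter.exists_seq_tendsto (nhdsWithin x {x}ᶜ ⊓ 𝓟 {w | ¬ g w < ε})
      have hyx : Tendsto y atTop (nhds x) :=
        hy.mono_right (le_trans inf_le_left nhdsWithin_le_nhds)
      have hyne : ∀ᶠ j in atTop, y j ≠ x := by
        have h1 : Tendsto y atTop (𝓟 ({x}ᶜ : Set X)) := by
          refine hy.mono_right (le_trans inf_le_left ?_)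
          rw [nhdsWithin]
          exact inf_le_right
        exact (tendsto_principal.1 h1).mono fun j hj => hj
      have hyε : ∀ᶠ j in atTop, ε ≤ g (y j) := by
        have h1 : Tendsto y atTop (𝓟 {w | ¬ g w < ε}) := hy.mono_right inf_le_right
        exact (tendsto_principal.1 h1).mono fun j hj => not_lt.1 hj
      obtain ⟨σ, z, hσ, hz, hr⟩ := happrox y hyx
      have hσtop : Tendsto σ atTop atTop := hσ.tendsto_atTop
      have hDpos : ∀ᶠ m in atTop, 0 < dist x (y (σ m)) :=
        (hσtop.eventually hyne).mono fun m hm => dist_pos.2 (Ne.symm hm)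
      have hD0 : Tendsto (fun m => dist x (y (σ m))) atTop (nhds 0) := by
        have h1 : Tendsto (fun m => y (σ m)) atTop (nhds x) := hyx.comp hσtop
        have h2 := tendsto_iff_dist_tendsto_zero.1 h1
        simpa only [dist_comm] using h2
      have hdzy : Tendsto (fun m => dist (y (σ m)) (z m)) atTop (nhds 0) := by
        have hprod : Tendsto
            (fun m => (dist (y (σ m)) (z m) / dist x (y (σ m))) * dist x (y (σ m)))
            atTop (nhds 0) := by
          simpa using hr.mul hD0
        refine hprod.congr' ?_
        filter_upwards [hDpos] with m hm
        field_simp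
      have hzx : Tendsto z atTop (nhds x) := by
        rw [tendsto_iff_dist_tendsto_zero]
        apply squeeze_zero (fun m => dist_nonneg)
          (g := fun m => dist (y (σ m)) (z m) + dist x (y (σ m)))
        · intro m
          calc dist (z m) x ≤ dist (z m) (y (σ m)) + dist (y (σ m)) x := dist_triangle _ _ _
          _ = dist (y (σ m)) (z m) + dist x (y (σ m)) := by rw [dist_comm (z m), dist_comm x]
        · simpa using hdzy.add hD0
      have hkey4 := key (ε/4) (by linarith)
      rw [eventually_nhdsWithin_iff] at hkey4
      have hmid : ∀ᶠ m in atTop,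
          |dist (f x) (f (z m)) - md (φ x - φ (z m))| ≤ ε/4 * dist x (z m) := by
        filter_upwards [hzx.eventually hkey4] with m hm
        rcases eq_or_ne (z m) x with hzm | hzm
        · simp [hzm]
        · have hgz : g (z m) ≤ ε/4 := hm ⟨(hz m).1, hzm⟩
          have hd : 0 < dist x (z m) := dist_pos.2 (Ne.symm hzm)
          rw [hgdef] at hgz
          exact (div_le_iff₀ hd).1 hgz
      have hk1 : (0:ℝ) < 1 / (k₀ : ℝ) := by positivity
      have hsmall : ∀ᶠ m in atTop, dist (z m) (y (σ m)) < 1 / (k₀ : ℝ) := by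
        have h1 : ∀ᶠ m in atTop, dist (y (σ m)) (z m) < 1 / (k₀ : ℝ) :=
          hdzy.eventually_lt_const hk1
        simpa only [dist_comm] using h1
      have hεσ : ∀ᶠ m in atTop, ε ≤ g (y (σ m)) := hσtop.eventually hyε
      set C : ℝ := (k₀ : ℝ) + M * (Lφ : ℝ) + ε/4 with hCdef
      have hfinal : ∀ᶠ m in atTop,
          ε ≤ C * (dist (y (σ m)) (z m) / dist x (y (σ m))) + ε/4 := by
        filter_upwards [hDpos, hmid, hsmall, hεσ] with m hD hmidm hsm hεm
        have e1 : dist (f (z m)) (f (y (σ m))) ≤ (k₀ : ℝ) * dist (z m) (y (σ m)) :=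
          (hz m).2 (y (σ m)) hsm
        have e2 : md (φ (z m) - φ (y (σ m))) ≤ M * ((Lφ : ℝ) * dist (z m) (y (σ m))) := by
          calc md (φ (z m) - φ (y (σ m))) ≤ M * ‖φ (z m) - φ (y (σ m))‖ := hmd _
          _ ≤ M * ((Lφ : ℝ) * dist (z m) (y (σ m))) := by
              have h1 := hφ.dist_le_mul (z m) (y (σ m))
              rw [dist_eq_norm] at h1
              exact mul_le_mul_of_nonneg_left h1 hM0
        have t1 : |dist (f x) (f (y (σ m))) - dist (f x) (f (z m))|
            ≤ dist (f (z m)) (f (y (σ m))) := by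
          have h1 := abs_dist_sub_le (f (y (σ m))) (f (z m)) (f x)
          rw [dist_comm (f (y (σ m))) (f x), dist_comm (f (z m)) (f x),
            dist_comm (f (y (σ m))) (f (z m))] at h1
          exact h1
        have t2 : |md (φ x - φ (z m)) - md (φ x - φ (y (σ m)))|
            ≤ md (φ (z m) - φ (y (σ m))) := by
          have h1 := hsub (φ x - φ (z m)) (φ x - φ (y (σ m)))
          have heq : (φ x - φ (z m)) - (φ x - φ (y (σ m))) = φ (y (σ m)) - φ (z m) := by abel
          rw [heq] at h1
          rw [map_sub_rev md (φ (y (σ m))) (φ (z m))] at h1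
          exact h1
        have e3 : |dist (f x) (f (y (σ m))) - md (φ x - φ (y (σ m)))|
            ≤ dist (f (z m)) (f (y (σ m))) + |dist (f x) (f (z m)) - md (φ x - φ (z m))|
              + md (φ (z m) - φ (y (σ m))) := by
          have hdecomp : dist (f x) (f (y (σ m))) - md (φ x - φ (y (σ m)))
              = (dist (f x) (f (y (σ m))) - dist (f x) (f (z m)))
                + ((dist (f x) (f (z m)) - md (φ x - φ (z m)))
                + (md (φ x - φ (z m)) - md (φ x - φ (y (σ m))))) := by ring
          rw [hdecomp]
          calc |_| ≤ |dist (f x) (f (y (σ m))) - dist (f x) (f (z m))|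
              + |(dist (f x) (f (z m)) - md (φ x - φ (z m)))
                + (md (φ x - φ (z m)) - md (φ x - φ (y (σ m))))| := abs_add_le _ _
          _ ≤ |dist (f x) (f (y (σ m))) - dist (f x) (f (z m))|
              + (|dist (f x) (f (z m)) - md (φ x - φ (z m))|
                + |md (φ x - φ (z m)) - md (φ x - φ (y (σ m)))|) := by
              have := abs_add_le (dist (f x) (f (z m)) - md (φ x - φ (z m)))
                (md (φ x - φ (z m)) - md (φ x - φ (y (σ m))))
              linarith
          _ ≤ _ := by linarith
        have e4 : dist x (z m) ≤ dist x (y (σ m)) + dist (z m) (y (σ m)) := by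
          have h1 := dist_triangle x (y (σ m)) (z m)
          rw [dist_comm (y (σ m)) (z m)] at h1
          exact h1
        have enum : |dist (f x) (f (y (σ m))) - md (φ x - φ (y (σ m)))|
            ≤ C * dist (z m) (y (σ m)) + ε/4 * dist x (y (σ m)) := by
          have hdd : dist (z m) (y (σ m)) ≥ 0 := dist_nonneg
          have := hmidm
          nlinarith [e1, e2, e3, e4, this, mul_le_mul_of_nonneg_left e4 (by linarith : (0:ℝ) ≤ ε/4)]
        have hεD : ε * dist x (y (σ m)) ≤
            |dist (f x) (f (y (σ m))) - md (φ x - φ (y (σ m)))| := by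
          rw [hgdef] at hεm
          exact (le_div_iff₀ hD).1 hεm
        have hfin2 : ε * dist x (y (σ m))
            ≤ C * dist (z m) (y (σ m)) + ε/4 * dist x (y (σ m)) := le_trans hεD enum
        have h5 : ε ≤ (C * dist (z m) (y (σ m)) + ε/4 * dist x (y (σ m))) / dist x (y (σ m)) :=
          (le_div_iff₀ hD).2 hfin2
        have h7 : C * (dist (y (σ m)) (z m) / dist x (y (σ m)))
            = C * dist (z m) (y (σ m)) / dist x (y (σ m)) := by
          rw [dist_comm (y (σ m)) (z m), mul_div_assoc]
        rw [h7, ← sub_le_iff_le_add, le_div_iff₀ hD]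
        have h8 : (ε - ε/4) * dist x (y (σ m))
            = ε * dist x (y (σ m)) - ε/4 * dist x (y (σ m)) := by ring
        linarith [hfin2]
      have hC : Tendsto (fun m => C * (dist (y (σ m)) (z m) / dist x (y (σ m))) + ε/4)
          atTop (nhds (ε/4)) := by
        have h1 := (hr.const_mul C).add_const (ε/4)
        simpa using h1
      have hlt : ∀ᶠ m in atTop,
          C * (dist (y (σ m)) (z m) / dist x (y (σ m))) + ε/4 < ε :=
        hC.eventually_lt_const (by linarith)
      obtain ⟨m, hm1, hm2⟩ := (hfinal.and hlt).exists
      linarith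
    by_cases hG : (nhdsWithin x ({x}ᶜ : Set X)).NeBot
    · have ht : Tendsto g (nhdsWithin x {x}ᶜ) (nhds 0) := by
        rw [Metric.tendsto_nhds]
        intro ε hε
        filter_upwards [main ε hε] with w hw
        rw [Real.dist_eq, sub_zero, abs_of_nonneg (hg0 w)]
        exact hw
      exact ht.limsup_eq
    · have hbot : nhdsWithin x ({x}ᶜ : Set X) = ⊥ := not_neBot.1 hG
      rw [Filter.limsup_eq, hbot]
      have huniv : {a : ℝ | ∀ᶠ y in (⊥ : Filter X), g y ≤ a} = Set.univ := by
        ext a; simp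
      rw [huniv]
      exact Real.sInf_of_not_bddBelow not_bddBelow_univ
  · rw [Filter.limsup_eq]
    have hempty : {a : ℝ | ∀ᶠ y in nhdsWithin x {x}ᶜ, g y ≤ a} = ∅ := by
      rw [Set.eq_empty_iff_forall_notMem]
      intro a ha
      refine hA ⟨a, ha.filter_mono (nhdsWithin_mono x ?_)⟩
      intro w hw
      exact hw.2
    rw [hempty, Real.sInf_empty]
end
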